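/- arXiv:1210.0548 — 3 statements merged into one kernel-verified Lean document; each statement's English description precedes it below -/
import Mathlib

section
/- The unnormalized two-qubit state Ψ := Π₂ + Π₃ is separable: it can be written as a sum of tensor products of positive semidefinite 2×2 matrices. Concretely, Ψ = ½ (|+i⟩⟨+i| ⊗ |−i⟩⟨−i| + |−i⟩⟨−i| ⊗ |+i⟩⟨+i| + |+⟩⟨+| ⊗ |+⟩⟨+| + |−⟩⟨−| ⊗ |−⟩⟨−|) · c for an appropriate positive constant c, or more simply, Ψ admits some decomposition Ψ = Σᵢ Aᵢ ⊗ Bᵢ with all Aᵢ, Bᵢ ⪰ 0. -/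
open Matrix Kronecker Real ComplexOrder

noncomputable section

/-- Bell vector `|Φ⁻⟩ = (|00⟩ − |11⟩)/√2`. -/
def PhiM : Fin 2 × Fin 2 → ℂ :=
  fun p => (Real.sqrt 2 : ℂ)⁻¹ *
    (if p = (0, 0) then 1 else if p = (1, 1) then -1 else 0)
/-- Bell vector `|Ψ⁺⟩ = (|01⟩ + |10⟩)/√2`. -/
def PsiP : Fin 2 × Fin 2 → ℂ :=
  fun p => (Real.sqrt 2 : ℂ)⁻¹ * (if p.1 = p.2 then 0 else 1)

/-- The unnormalized state `Ψ = Π₂ + Π₃`, sum of the projectors onto `|Φ⁻⟩` and `|Ψ⁺⟩`. -/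
def PsiOp : Matrix (Fin 2 × Fin 2) (Fin 2 × Fin 2) ℂ :=
  vecMulVec PhiM (star PhiM) + vecMulVec PsiP (star PsiP)

/-! `|±i⟩ ⊗ |±i⟩ = (|Φ⁻⟩ ± i |Ψ⁺⟩)/√2` are orthonormal and span the same plane as
`|Φ⁻⟩, |Ψ⁺⟩`, so `Ψ = Π₂ + Π₃`, the projector onto that plane, equals
`|+i⟩⟨+i| ⊗ |+i⟩⟨+i| + |−i⟩⟨−i| ⊗ |−i⟩⟨−i|`. -/

open Complex (I)

/-- `circProj (±I) = 2 |±i⟩⟨±i|`. -/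
def circProj (s : ℂ) : Matrix (Fin 2) (Fin 2) ℂ :=
  vecMulVec ![1, s] (star ![1, s])

lemma PsiOp_eq_smul_add_kronecker :
    PsiOp = (4⁻¹ : ℝ) • (circProj I ⊗ₖ circProj I + circProj (-I) ⊗ₖ circProj (-I)) := by
  have hsqrt : ((√2 : ℝ) : ℂ)⁻¹ * ((√2 : ℝ) : ℂ)⁻¹ = 2⁻¹ := by
    rw [← mul_inv, ← Complex.ofReal_mul, Real.mul_self_sqrt zero_le_two]
    norm_num
  ext ⟨i, j⟩ ⟨k, l⟩
  fin_cases i <;> fin_cases j <;> fin_cases k <;> fin_cases l <;>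
    norm_num [PsiOp, PhiM, PsiP, circProj, vecMulVec, hsqrt, Complex.ext_iff]

/-- `Ψ = Π₂ + Π₃` is separable: it admits a decomposition `Ψ = Σᵢ Aᵢ ⊗ Bᵢ`
with all `Aᵢ, Bᵢ` positive semidefinite `2×2` matrices. -/
theorem PsiOp_separable :
    ∃ (k : ℕ) (A B : Fin k → Matrix (Fin 2) (Fin 2) ℂ),
      (∀ i, (A i).PosSemidef ∧ (B i).PosSemidef) ∧
      PsiOp = ∑ i, A i ⊗ₖ B i := by
  refine ⟨2, ![(4⁻¹ : ℝ) • circProj I, (4⁻¹ : ℝ) • circProj (-I)],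
    ![circProj I, circProj (-I)], ?_, ?_⟩
  · intro i
    fin_cases i <;>
      exact ⟨(posSemidef_vecMulVec_self_star _).smul (by norm_num),
        posSemidef_vecMulVec_self_star _⟩
  · simp [PsiOp_eq_smul_add_kronecker, Fin.sum_univ_two, smul_kronecker]
end
end

section
/- Let ρ be a positive semidefinite matrix on H₁ ⊗ H₂ that is separable (ρ = Σᵢ pᵢ ρ¹ᵢ ⊗ ρ²ᵢ with pᵢ ≥ 0, ρᵏᵢ positive semidefinite), and let F₁ : ℂ² → H₁, F₂ : ℂ² → H₂ be linear maps. Then for every θ ∈ [0, π/4], tr[ρ (F₁⊗F₂) H_θ (F₁⊗F₂)†] ≥ 0. -/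
open Matrix Kronecker Real ComplexOrder

noncomputable section

def σx : Matrix (Fin 2) (Fin 2) ℂ := !![0, 1; 1, 0]
def σz : Matrix (Fin 2) (Fin 2) ℂ := !![1, 0; 0, -1]

def Hmat (θ : ℝ) : Matrix (Fin 2 × Fin 2) (Fin 2 × Fin 2) ℂ :=
  1 - (Real.cos θ : ℂ) • (σx ⊗ₖ σx) - (Real.sin θ : ℂ) • (σz ⊗ₖ σz)

/-- Structure facts about a `2 × 2` positive semidefinite complex matrix. -/
lemma psd_facts (A : Matrix (Fin 2) (Fin 2) ℂ) (hA : A.PosSemidef) :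
    ∃ a0 a1 r : ℝ, 0 ≤ a0 ∧ 0 ≤ a1 ∧ 4 * r ^ 2 ≤ 4 * (a0 * a1) ∧
      A.trace = ((a0 + a1 : ℝ) : ℂ) ∧ (A * σx).trace = ((2 * r : ℝ) : ℂ) ∧
      (A * σz).trace = ((a0 - a1 : ℝ) : ℂ) := by
  have herm := hA.isHermitian
  have h10 : A 1 0 = star (A 0 1) := (herm.apply 1 0).symm
  have d00 : (A 0 0).im = 0 := by
    have := congrArg Complex.im (herm.apply 0 0); simp [Complex.conj_im] at this; linarith
  have d11 : (A 1 1).im = 0 := by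
    have := congrArg Complex.im (herm.apply 1 1); simp [Complex.conj_im] at this; linarith
  refine ⟨(A 0 0).re, (A 1 1).re, (A 0 1).re, ?_, ?_, ?_, ?_, ?_, ?_⟩
  · have h2 := hA.re_dotProduct_nonneg ![1, 0]
    simpa [dotProduct, Matrix.mulVec, Fin.sum_univ_two] using h2
  · have h3 := hA.re_dotProduct_nonneg ![0, 1]
    simpa [dotProduct, Matrix.mulVec, Fin.sum_univ_two] using h3
  · have key : discrim (A 0 0).re (2 * (A 0 1).re) (A 1 1).re ≤ 0 := by
      apply discrim_le_zero
      intro t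
      have h1 := hA.re_dotProduct_nonneg ![(t:ℂ), 1]
      simp [dotProduct, Matrix.mulVec, Fin.sum_univ_two, h10, Complex.conj_re] at h1
      nlinarith [h1]
    rw [discrim] at key; nlinarith [key]
  · rw [Matrix.trace_fin_two]
    apply Complex.ext <;> simp [d00, d11]
  · have h : (A * σx).trace = A 0 1 + A 1 0 := by
      simp [Matrix.trace_fin_two, Matrix.mul_apply, σx, Fin.sum_univ_two]
    rw [h, h10]; apply Complex.ext <;> simp [Complex.conj_re, Complex.conj_im] <;> ring
  · have h : (A * σz).trace = A 0 0 - A 1 1 := by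
      simp [Matrix.trace_fin_two, Matrix.mul_apply, σz, Fin.sum_univ_two]
      ring
    rw [h]; apply Complex.ext <;> simp [d00, d11]

lemma chsh_aux (xA xB zA zB tA tB c s : ℝ) (htA : 0 ≤ tA) (htB : 0 ≤ tB)
    (hA2 : xA ^ 2 + zA ^ 2 ≤ tA ^ 2) (hB2 : xB ^ 2 + zB ^ 2 ≤ tB ^ 2)
    (hc0 : 0 ≤ c) (hc1 : c ≤ 1) (hs0 : 0 ≤ s) (hs1 : s ≤ 1) :
    c * (xA * xB) + s * (zA * zB) ≤ tA * tB := by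
  have e1 : c * (xA * xB) ≤ |xA| * |xB| := by
    rw [← abs_mul]
    nlinarith [le_abs_self (xA * xB), abs_nonneg (xA * xB)]
  have e2 : s * (zA * zB) ≤ |zA| * |zB| := by
    rw [← abs_mul]
    nlinarith [le_abs_self (zA * zB), abs_nonneg (zA * zB)]
  have key : (|xA| * |xB| + |zA| * |zB|) ^ 2 + (|xA| * |zB| - |zA| * |xB|) ^ 2
      = (xA ^ 2 + zA ^ 2) * (xB ^ 2 + zB ^ 2) := by
    rw [← sq_abs xA, ← sq_abs xB, ← sq_abs zA, ← sq_abs zB]; ring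
  have h4 : (xA ^ 2 + zA ^ 2) * (xB ^ 2 + zB ^ 2) ≤ tA ^ 2 * tB ^ 2 :=
    mul_le_mul hA2 hB2 (by positivity) (by positivity)
  have cauchy : (|xA| * |xB| + |zA| * |zB|) ^ 2 ≤ tA ^ 2 * tB ^ 2 := by
    nlinarith [sq_nonneg (|xA| * |zB| - |zA| * |xB|)]
  have hL : 0 ≤ |xA| * |xB| + |zA| * |zB| := by positivity
  have e3 : |xA| * |xB| + |zA| * |zB| ≤ tA * tB := by
    nlinarith [mul_nonneg htA htB]
  linarith

lemma chsh_real (a0 a1 b0 b1 rA rB c s : ℝ) (ha0 : 0 ≤ a0) (ha1 : 0 ≤ a1)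
    (hb0 : 0 ≤ b0) (hb1 : 0 ≤ b1) (hrA : 4 * rA ^ 2 ≤ 4 * (a0 * a1))
    (hrB : 4 * rB ^ 2 ≤ 4 * (b0 * b1)) (hc0 : 0 ≤ c) (hc1 : c ≤ 1)
    (hs0 : 0 ≤ s) (hs1 : s ≤ 1) :
    0 ≤ (a0 + a1) * (b0 + b1) - c * (2 * rA * (2 * rB)) - s * ((a0 - a1) * (b0 - b1)) := by
  have := chsh_aux (2 * rA) (2 * rB) (a0 - a1) (b0 - b1) (a0 + a1) (b0 + b1) c s
    (by positivity) (by positivity) (by nlinarith) (by nlinarith) hc0 hc1 hs0 hs1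
  linarith

/-- The CHSH operator `Hmat θ` has nonnegative trace against any product of positive
semidefinite `2 × 2` matrices, for `θ ∈ [0, π/4]`. -/
lemma core_chsh (θ : ℝ) (hθ : θ ∈ Set.Icc 0 (π / 4)) (A B : Matrix (Fin 2) (Fin 2) ℂ)
    (hA : A.PosSemidef) (hB : B.PosSemidef) : 0 ≤ ((A ⊗ₖ B) * Hmat θ).trace := by
  obtain ⟨a0, a1, rA, ha0, ha1, hrA, htrA, hxA, hzA⟩ := psd_facts A hA
  obtain ⟨b0, b1, rB, hb0, hb1, hrB, htrB, hxB, hzB⟩ := psd_facts B hB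
  have expand : (A ⊗ₖ B) * Hmat θ
      = (A ⊗ₖ B) - (Real.cos θ : ℂ) • ((A * σx) ⊗ₖ (B * σx))
        - (Real.sin θ : ℂ) • ((A * σz) ⊗ₖ (B * σz)) := by
    simp [Hmat, mul_sub, Matrix.mul_smul, ← mul_kronecker_mul]
  rw [expand, Matrix.trace_sub, Matrix.trace_sub, Matrix.trace_smul, Matrix.trace_smul,
    trace_kronecker, trace_kronecker, trace_kronecker, htrA, htrB, hxA, hxB, hzA, hzB]
  have hθ0 := hθ.1
  have hθ1 : θ ≤ π / 2 := le_trans hθ.2 (by linarith [Real.pi_pos])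
  have key : (0:ℝ) ≤ (a0 + a1) * (b0 + b1) - Real.cos θ * (2 * rA * (2 * rB))
      - Real.sin θ * ((a0 - a1) * (b0 - b1)) :=
    chsh_real a0 a1 b0 b1 rA rB _ _ ha0 ha1 hb0 hb1 hrA hrB
      (Real.cos_nonneg_of_mem_Icc ⟨by linarith, hθ1⟩) (Real.cos_le_one θ)
      (Real.sin_nonneg_of_nonneg_of_le_pi hθ0 (by linarith [Real.pi_pos])) (Real.sin_le_one θ)
  have h := Complex.zero_le_real.mpr key
  convert h using 1
  push_cast [smul_eq_mul]
  ring

lemma kron_conjTranspose {l m p q : Type*} (A : Matrix l m ℂ) (B : Matrix p q ℂ) :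
    (A ⊗ₖ B)ᴴ = Aᴴ ⊗ₖ Bᴴ := by
  ext ⟨i, j⟩ ⟨k, l'⟩
  simp [Matrix.conjTranspose_apply, Matrix.kroneckerMap_apply]

/-- If `ρ` is a separable positive semidefinite matrix on `H₁ ⊗ H₂` then for all
linear maps `F₁ : ℂ² → H₁`, `F₂ : ℂ² → H₂` and all `θ ∈ [0, π/4]`,
`tr[ρ (F₁⊗F₂) H_θ (F₁⊗F₂)†] ≥ 0`. -/
theorem separable_filtered_CHSH_nonneg
    {m n : Type*} [Fintype m] [Fintype n] [DecidableEq m] [DecidableEq n]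
    (ρ : Matrix (m × n) (m × n) ℂ)
    (hρsep : ∃ (k : ℕ) (p : Fin k → ℝ) (ρ₁ : Fin k → Matrix m m ℂ)
        (ρ₂ : Fin k → Matrix n n ℂ),
      (∀ i, 0 ≤ p i ∧ (ρ₁ i).PosSemidef ∧ (ρ₂ i).PosSemidef) ∧
      ρ = ∑ i, (p i : ℂ) • (ρ₁ i ⊗ₖ ρ₂ i))
    (θ : ℝ) (hθ : θ ∈ Set.Icc 0 (π / 4))
    (F₁ : Matrix m (Fin 2) ℂ) (F₂ : Matrix n (Fin 2) ℂ) :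
    0 ≤ (ρ * ((F₁ ⊗ₖ F₂) * Hmat θ * (F₁ ⊗ₖ F₂)ᴴ)).trace := by
  obtain ⟨k, p, ρ₁, ρ₂, hfacts, rfl⟩ := hρsep
  rw [Finset.sum_mul, Matrix.trace_sum]
  apply Finset.sum_nonneg
  intro i _
  obtain ⟨hp, h1, h2⟩ := hfacts i
  rw [Matrix.smul_mul, Matrix.trace_smul]
  have hterm : 0 ≤ ((ρ₁ i ⊗ₖ ρ₂ i) * ((F₁ ⊗ₖ F₂) * Hmat θ * (F₁ ⊗ₖ F₂)ᴴ)).trace := by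
    have cyc : ((ρ₁ i ⊗ₖ ρ₂ i) * ((F₁ ⊗ₖ F₂) * Hmat θ * (F₁ ⊗ₖ F₂)ᴴ)).trace
        = (((F₁ ⊗ₖ F₂)ᴴ * (ρ₁ i ⊗ₖ ρ₂ i) * (F₁ ⊗ₖ F₂)) * Hmat θ).trace := by
      rw [show (ρ₁ i ⊗ₖ ρ₂ i) * ((F₁ ⊗ₖ F₂) * Hmat θ * (F₁ ⊗ₖ F₂)ᴴ)
          = ((ρ₁ i ⊗ₖ ρ₂ i) * ((F₁ ⊗ₖ F₂) * Hmat θ)) * (F₁ ⊗ₖ F₂)ᴴ by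
        simp only [Matrix.mul_assoc]]
      rw [Matrix.trace_mul_cycle]
      simp only [Matrix.mul_assoc]
    rw [cyc, kron_conjTranspose, ← mul_kronecker_mul, ← mul_kronecker_mul]
    exact core_chsh θ hθ _ _ (h1.conjTranspose_mul_mul_same F₁) (h2.conjTranspose_mul_mul_same F₂)
  have hpc : (0:ℂ) ≤ (p i : ℂ) := Complex.zero_le_real.mpr hp
  rw [smul_eq_mul]
  exact mul_nonneg hpc hterm
end
end

section
/- Let Ω be a separable completely positive map from operators on ℂ²⊗ℂ² to operators on (H₁⊗ℂ²)⊗(H₂⊗ℂ²) (separable with respect to the bracketed bipartition), and suppose a unit-trace positive semidefinite μ on H₁⊗H₂ satisfies μᵀ ⊗ H_{π/4} − Ω(H_{π/4}) ⪰ 0 with Ω realizing the projected matrix M₀(η) and tracelessness as in the Lemma. If 2μᵀ = ½ tr_{ℂ²⊗ℂ²}[(1_{H₁⊗H₂} ⊗ Ψ) Ω(Ψ)] where Ψ = Π₂ + Π₃ is a separable two-qubit operator, then μ is separable on H₁⊗H₂. -/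
open Matrix Kronecker Real ComplexOrder

noncomputable section

/-- `tr_{ℂ²⊗ℂ²}[(1_{H₁⊗H₂} ⊗ Ψ) M]` where the output `M` of the separable map lives on
`(H₁⊗ℂ²)⊗(H₂⊗ℂ²)` and `Ψ` pairs with the two `ℂ²` factors:
`(x, y) ↦ Σ_{s,u} Ψ_{s,u} M ((x₁,u₁),(x₂,u₂)) ((y₁,s₁),(y₂,s₂))`. -/
def sandwichTrace {a b : Type*}
    (M : Matrix ((a × Fin 2) × (b × Fin 2)) ((a × Fin 2) × (b × Fin 2)) ℂ) :
    Matrix (a × b) (a × b) ℂ :=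
  fun x y => ∑ s : Fin 2 × Fin 2, ∑ u : Fin 2 × Fin 2,
    PsiOp s u * M ((x.1, u.1), (x.2, u.2)) ((y.1, s.1), (y.2, s.2))

/-!
With `w₀, w₁` the eigenvectors of `σ_y`, `Ψ = Σₗ (wₗwₗ†) ⊗ (wₗwₗ†)`, so `Ψ` is separable, and the
pairing `tr_{ℂ²⊗ℂ²}[(1 ⊗ Ψ) ·]` is the map `M ↦ Σₗ (⟨wₗ| ⊗ ⟨wₗ|) M (|wₗ⟩ ⊗ |wₗ⟩)`. Both `Ω` and this
map have Kraus operators of product form `K₁ ⊗ K₂`, and conjugation by `K₁ ⊗ K₂` sends `A ⊗ B` to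
`K₁AK₁† ⊗ K₂BK₂†`, so both maps preserve the cone of separable matrices. The cone is also closed
under nonnegative scaling and transposition, and `μ = (¼ tr_{ℂ²⊗ℂ²}[(1 ⊗ Ψ) Ω(Ψ)])ᵀ`.
-/

def separableCone (α β : Type*) : AddSubmonoid (Matrix (α × β) (α × β) ℂ) where
  carrier := {ρ | ∃ (k : ℕ) (A : Fin k → Matrix α α ℂ) (B : Fin k → Matrix β β ℂ),
    (∀ i, (A i).PosSemidef ∧ (B i).PosSemidef) ∧ ρ = ∑ i, A i ⊗ₖ B i}
  zero_mem' := ⟨0, Fin.elim0, Fin.elim0, fun i => i.elim0, by simp⟩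
  add_mem' := by
    rintro _ _ ⟨k, A, B, hAB, rfl⟩ ⟨k', A', B', hAB', rfl⟩
    refine ⟨k + k', Fin.append A A', Fin.append B B', fun i => ?_, by simp [Fin.sum_univ_add]⟩
    refine Fin.addCases (fun j => ?_) (fun j => ?_) i <;> simp [hAB, hAB']

namespace separableCone

variable {α β α' β' : Type*}

theorem mem_iff {ρ : Matrix (α × β) (α × β) ℂ} :
    ρ ∈ separableCone α β ↔ ∃ (k : ℕ) (A : Fin k → Matrix α α ℂ) (B : Fin k → Matrix β β ℂ),
      (∀ i, (A i).PosSemidef ∧ (B i).PosSemidef) ∧ ρ = ∑ i, A i ⊗ₖ B i :=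
  Iff.rfl

theorem kronecker_mem {A : Matrix α α ℂ} {B : Matrix β β ℂ}
    (hA : A.PosSemidef) (hB : B.PosSemidef) : A ⊗ₖ B ∈ separableCone α β :=
  mem_iff.2 ⟨1, fun _ => A, fun _ => B, fun _ => ⟨hA, hB⟩, by simp⟩

theorem smul_mem {ρ : Matrix (α × β) (α × β) ℂ} (hρ : ρ ∈ separableCone α β)
    {c : ℂ} (hc : 0 ≤ c) : c • ρ ∈ separableCone α β := by
  obtain ⟨k, A, B, hAB, rfl⟩ := mem_iff.1 hρ
  refine mem_iff.2 ⟨k, fun i => c • A i, B, fun i => ⟨(hAB i).1.smul hc, (hAB i).2⟩, ?_⟩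
  simp [Finset.smul_sum, smul_kronecker]

theorem transpose_mem {ρ : Matrix (α × β) (α × β) ℂ} (hρ : ρ ∈ separableCone α β) :
    ρᵀ ∈ separableCone α β := by
  obtain ⟨k, A, B, hAB, rfl⟩ := mem_iff.1 hρ
  refine mem_iff.2 ⟨k, fun i => (A i)ᵀ, fun i => (B i)ᵀ,
    fun i => ⟨(hAB i).1.transpose, (hAB i).2.transpose⟩, ?_⟩
  simp [transpose_sum, kroneckerMap_transpose]

theorem kronecker_conj_mem [Fintype α] [Fintype β] [Finite α'] [Finite β']
    {ρ : Matrix (α × β) (α × β) ℂ} (hρ : ρ ∈ separableCone α β)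
    (K₁ : Matrix α' α ℂ) (K₂ : Matrix β' β ℂ) :
    (K₁ ⊗ₖ K₂) * ρ * (K₁ ⊗ₖ K₂)ᴴ ∈ separableCone α' β' := by
  obtain ⟨k, A, B, hAB, rfl⟩ := mem_iff.1 hρ
  refine mem_iff.2 ⟨k, fun i => K₁ * A i * K₁ᴴ, fun i => K₂ * B i * K₂ᴴ,
    fun i => ⟨(hAB i).1.mul_mul_conjTranspose_same K₁,
      (hAB i).2.mul_mul_conjTranspose_same K₂⟩, ?_⟩
  simp [Matrix.mul_sum, Matrix.sum_mul, conjTranspose_kronecker, mul_kronecker_mul]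

end separableCone

def sigmaYEigvec (l : Fin 2) : Fin 2 → ℂ :=
  fun u => (Real.sqrt 2 : ℂ)⁻¹ * (if u = 0 then 1 else if l = 0 then Complex.I else -Complex.I)

theorem psiOp_eq_sum_kronecker :
    PsiOp = ∑ l, vecMulVec (sigmaYEigvec l) (star (sigmaYEigvec l)) ⊗ₖ
      vecMulVec (sigmaYEigvec l) (star (sigmaYEigvec l)) := by
  have h2 : (Real.sqrt 2 : ℂ) ^ 2 = 2 := by
    rw [← Complex.ofReal_pow, Real.sq_sqrt zero_le_two]; norm_num
  have h4 : (Real.sqrt 2 : ℂ) ^ 4 = 4 := by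
    rw [show 4 = 2 * 2 from rfl, pow_mul, h2]; norm_num
  -- both sides are `½ [[1,0,0,-1],[0,1,1,0],[0,1,1,0],[-1,0,0,1]]`
  ext ⟨s₁, s₂⟩ ⟨u₁, u₂⟩
  fin_cases s₁ <;> fin_cases s₂ <;> fin_cases u₁ <;> fin_cases u₂ <;>
    simp [PsiOp, PhiM, PsiP, sigmaYEigvec, vecMulVec_apply, Fin.sum_univ_two,
      ← Complex.ofReal_inv] <;> ring_nf <;> simp [h2, h4] <;> norm_num

theorem psiOp_mem_separableCone : PsiOp ∈ separableCone (Fin 2) (Fin 2) := by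
  rw [psiOp_eq_sum_kronecker]
  exact sum_mem fun l _ => separableCone.kronecker_mem
    (posSemidef_vecMulVec_self_star _) (posSemidef_vecMulVec_self_star _)

/-- The operator `1 ⊗ ⟨w|`. -/
def partialBra {n : Type*} (a : Type*) [DecidableEq a] (w : n → ℂ) : Matrix a (a × n) ℂ :=
  Matrix.of fun x p => if x = p.1 then star (w p.2) else 0

section Sandwich

variable {a b : Type*} [Fintype a] [Fintype b] [DecidableEq a] [DecidableEq b]

theorem sandwichTrace_eq_sum
    (M : Matrix ((a × Fin 2) × (b × Fin 2)) ((a × Fin 2) × (b × Fin 2)) ℂ) :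
    sandwichTrace M = ∑ l, (partialBra a (sigmaYEigvec l) ⊗ₖ partialBra b (sigmaYEigvec l)) * M *
      (partialBra a (sigmaYEigvec l) ⊗ₖ partialBra b (sigmaYEigvec l))ᴴ := by
  ext x y
  simp only [sandwichTrace, psiOp_eq_sum_kronecker, Matrix.sum_apply, Finset.sum_mul]
  rw [Finset.sum_congr rfl fun _ _ => Finset.sum_comm, Finset.sum_comm]
  refine Finset.sum_congr rfl fun l _ => ?_
  simp only [mul_apply, partialBra, Fintype.sum_prod_type, vecMulVec_apply, kroneckerMap_apply,
    of_apply, conjTranspose_apply, Finset.sum_mul, ite_mul, mul_ite, zero_mul, mul_zero,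
    apply_ite star, star_zero, Finset.sum_ite_irrel, Finset.sum_const_zero, Finset.sum_ite_eq,
    Finset.mem_univ, if_true, Pi.star_apply, star_mul', star_star]
  ac_rfl

theorem sandwichTrace_mem_separableCone
    {M : Matrix ((a × Fin 2) × (b × Fin 2)) ((a × Fin 2) × (b × Fin 2)) ℂ}
    (hM : M ∈ separableCone (a × Fin 2) (b × Fin 2)) : sandwichTrace M ∈ separableCone a b := by
  rw [sandwichTrace_eq_sum]
  exact sum_mem fun l _ => separableCone.kronecker_conj_mem hM _ _

end Sandwich

theorem mu_separable_general
    {a b : Type*} [Fintype a] [Fintype b] [DecidableEq a] [DecidableEq b]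
    (μ : Matrix (a × b) (a × b) ℂ)
    (m : ℕ)
    (F₁ : Fin m → Matrix (a × Fin 2) (Fin 2) ℂ)
    (F₂ : Fin m → Matrix (b × Fin 2) (Fin 2) ℂ)
    (h : (2 : ℂ) • μᵀ = (2 : ℂ)⁻¹ •
      sandwichTrace (∑ i, (F₁ i ⊗ₖ F₂ i) * PsiOp * (F₁ i ⊗ₖ F₂ i)ᴴ)) :
    ∃ (k : ℕ) (A : Fin k → Matrix a a ℂ) (B : Fin k → Matrix b b ℂ),
      (∀ i, (A i).PosSemidef ∧ (B i).PosSemidef) ∧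
      μ = ∑ i, A i ⊗ₖ B i := by
  have hΩ : ∑ i, (F₁ i ⊗ₖ F₂ i) * PsiOp * (F₁ i ⊗ₖ F₂ i)ᴴ ∈ separableCone _ _ :=
    sum_mem fun i _ => separableCone.kronecker_conj_mem psiOp_mem_separableCone _ _
  have hμT : μᵀ = (4 : ℂ)⁻¹ • sandwichTrace (∑ i, (F₁ i ⊗ₖ F₂ i) * PsiOp * (F₁ i ⊗ₖ F₂ i)ᴴ) := by
    rw [← inv_smul_smul₀ (two_ne_zero (α := ℂ)) μᵀ, h, smul_smul]
    norm_num
  have hμT_mem : μᵀ ∈ separableCone a b := hμT ▸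
    separableCone.smul_mem (sandwichTrace_mem_separableCone hΩ) (by positivity)
  exact separableCone.mem_iff.1 (transpose_transpose μ ▸ separableCone.transpose_mem hμT_mem)

/-- If `μ` is a unit-trace PSD matrix on `H₁⊗H₂` satisfying
`2μᵀ = ½ tr_{ℂ²⊗ℂ²}[(1 ⊗ Ψ) Ω(Ψ)]` for a separable map
`Ω(X) = Σᵢ (F₁ⁱ⊗F₂ⁱ) X (F₁ⁱ⊗F₂ⁱ)†` with `Fₖⁱ : ℂ² → Hₖ⊗ℂ²`,
then `μ` is separable on `H₁⊗H₂`. -/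
theorem mu_separable
    {a b : Type*} [Fintype a] [Fintype b] [DecidableEq a] [DecidableEq b]
    (μ : Matrix (a × b) (a × b) ℂ) (hμ : μ.PosSemidef) (hμtr : μ.trace = 1)
    (m : ℕ)
    (F₁ : Fin m → Matrix (a × Fin 2) (Fin 2) ℂ)
    (F₂ : Fin m → Matrix (b × Fin 2) (Fin 2) ℂ)
    (h : (2 : ℂ) • μᵀ = (2 : ℂ)⁻¹ •
      sandwichTrace (∑ i, (F₁ i ⊗ₖ F₂ i) * PsiOp * (F₁ i ⊗ₖ F₂ i)ᴴ)) :
    ∃ (k : ℕ) (A : Fin k → Matrix a a ℂ) (B : Fin k → Matrix b b ℂ),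
      (∀ i, (A i).PosSemidef ∧ (B i).PosSemidef) ∧
      μ = ∑ i, A i ⊗ₖ B i :=
  mu_separable_general μ m F₁ F₂ h
end
end
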